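/- arXiv:2508.17321 — 14 statements merged into one kernel-verified Lean document; each statement's English description precedes it below -/
import Mathlib

section
/- Let I ⊆ ℝ be a nonempty open interval and let γ : ℝ → ℝ² be twice differentiable on I with ‖γ'(s)‖ = 1 for every s ∈ I. Define the unit normal n(s) = (−γ'₂(s), γ'₁(s)) and the signed curvature κ(s) = ⟨γ''(s), n(s)⟩. Let u ∈ ℝ² and λ ∈ ℝ satisfy ⟨n(s), u⟩ + λ = 0 for every s ∈ I. Then either κ(s) = 0 for every s ∈ I, or u = 0 and λ = 0. -/
/-!
Write `T = γ'` and `n = J T` for the rotation `J` by a right angle. Unit speed gives the Frenet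
equations `T' = κ n` and `n' = -κ T`, so differentiating the constant `⟪n, u⟫ = -λ` yields
`κ ⟪T, u⟫ = 0`. At a point where `κ ≠ 0` this forces `⟪T, u⟫ = 0`. Since `{T, n}` is orthonormal,
`⟪T, u⟫² = ‖u‖² - λ²` is constant, hence identically zero near that point; its derivative
`⟪T', u⟫ = κ ⟪n, u⟫ = -κ λ` therefore vanishes there, so `λ = 0`, and then `‖u‖² = λ² = 0`.
-/

open Filter Topology
open scoped InnerProductSpace EuclideanSpace

section Calculus

variable {E : Type*} [NormedAddCommGroup E] [InnerProductSpace ℝ E]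

theorem HasDerivAt.eq_zero_of_eventuallyEq_const {f : ℝ → E} {f' c : E} {x : ℝ}
    (hf : HasDerivAt f f' x) (hc : f =ᶠ[𝓝 x] fun _ => c) : f' = 0 :=
  hf.unique ((hasDerivAt_const x c).congr_of_eventuallyEq hc)

theorem HasDerivAt.inner_const {f : ℝ → E} {f' : E} {x : ℝ} (hf : HasDerivAt f f' x) (u : E) :
    HasDerivAt (fun t => ⟪f t, u⟫_ℝ) ⟪f', u⟫_ℝ x := by
  simpa using hf.inner ℝ (hasDerivAt_const x u)

theorem HasDerivAt.inner_eq_zero_of_eventually_norm_eq {f : ℝ → E} {f' : E} {x c : ℝ}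
    (hf : HasDerivAt f f' x) (hc : ∀ᶠ t in 𝓝 x, ‖f t‖ = c) : ⟪f x, f'⟫_ℝ = 0 := by
  simpa using
    hf.norm_sq.eq_zero_of_eventuallyEq_const (c := c ^ 2) (hc.mono fun t ht => by simp [ht])

end Calculus

namespace Orientation

variable {E : Type*} [NormedAddCommGroup E] [InnerProductSpace ℝ E] [Fact (Module.finrank ℝ E = 2)]
  (o : Orientation ℝ E (Fin 2))

local notation "J" => o.rightAngleRotation

theorem eq_inner_smul_rightAngleRotation_of_inner_eq_zero {a x : E} (ha : ‖a‖ = 1)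
    (h : ⟪a, x⟫_ℝ = 0) : x = ⟪x, J a⟫_ℝ • J a := by
  refine ext_inner_right ℝ fun y => ?_
  have := o.inner_mul_inner_add_areaForm_mul_areaForm a x y
  rw [← o.inner_rightAngleRotation_left, ← o.inner_rightAngleRotation_left, h, ha] at this
  rw [real_inner_smul_left, real_inner_comm (J a) x]
  linarith

theorem inner_sq_add_inner_rightAngleRotation_sq (a u : E) :
    ⟪a, u⟫_ℝ ^ 2 + ⟪J a, u⟫_ℝ ^ 2 = ‖a‖ ^ 2 * ‖u‖ ^ 2 := by
  simpa only [o.inner_rightAngleRotation_left] using o.inner_sq_add_areaForm_sq a u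

variable {T : ℝ → E} {T' : E} {s : ℝ}

theorem eq_inner_smul_rightAngleRotation_of_hasDerivAt (hT : HasDerivAt T T' s)
    (hunit : ∀ᶠ t in 𝓝 s, ‖T t‖ = 1) : T' = ⟪T', J (T s)⟫_ℝ • J (T s) :=
  o.eq_inner_smul_rightAngleRotation_of_inner_eq_zero hunit.self_of_nhds
    (hT.inner_eq_zero_of_eventually_norm_eq hunit)

theorem hasDerivAt_rightAngleRotation_comp (hT : HasDerivAt T T' s)
    (hunit : ∀ᶠ t in 𝓝 s, ‖T t‖ = 1) :
    HasDerivAt (fun t => J (T t)) (-⟪T', J (T s)⟫_ℝ • T s) s := by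
  have hT' := o.eq_inner_smul_rightAngleRotation_of_hasDerivAt hT hunit
  have hJ : HasDerivAt (fun t => J (T t)) (J T') s :=
    (J).toContinuousLinearEquiv.hasFDerivAt.comp_hasDerivAt s hT
  rw [hT'] at hJ
  simpa [neg_smul] using hJ

theorem eq_zero_of_inner_rightAngleRotation_add_eventually_eq_zero {u : E} {lam : ℝ}
    (hT : HasDerivAt T T' s) (hunit : ∀ᶠ t in 𝓝 s, ‖T t‖ = 1)
    (heq : ∀ᶠ t in 𝓝 s, ⟪J (T t), u⟫_ℝ + lam = 0) (hκ : ⟪T', J (T s)⟫_ℝ ≠ 0) :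
    u = 0 ∧ lam = 0 := by
  set κ := ⟪T', J (T s)⟫_ℝ
  have hg : ⟪J (T s), u⟫_ℝ = -lam := by linarith [heq.self_of_nhds]
  have hf₀ : ⟪T s, u⟫_ℝ = 0 := by
    have h := ((o.hasDerivAt_rightAngleRotation_comp hT hunit).inner_const u)
      |>.eq_zero_of_eventuallyEq_const (c := -lam) (heq.mono fun t ht => by linarith)
    rw [real_inner_smul_left] at h
    exact (mul_eq_zero.1 h).resolve_left (neg_ne_zero.2 hκ)
  have hsq : ∀ᶠ t in 𝓝 s, ⟪T t, u⟫_ℝ ^ 2 = ‖u‖ ^ 2 - lam ^ 2 := by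
    filter_upwards [hunit, heq] with t h1 h2
    have := o.inner_sq_add_inner_rightAngleRotation_sq (T t) u
    rw [h1, show ⟪J (T t), u⟫_ℝ = -lam by linarith] at this
    linarith
  have hc : ‖u‖ ^ 2 - lam ^ 2 = 0 := by rw [← hsq.self_of_nhds, hf₀, zero_pow two_ne_zero]
  have hf : ∀ᶠ t in 𝓝 s, ⟪T t, u⟫_ℝ = 0 := by
    filter_upwards [hsq] with t ht
    exact pow_eq_zero_iff two_ne_zero |>.1 (ht.trans hc)
  have hlam : lam = 0 := by
    have h := (hT.inner_const u).eq_zero_of_eventuallyEq_const hf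
    rw [o.eq_inner_smul_rightAngleRotation_of_hasDerivAt hT hunit, real_inner_smul_left, hg] at h
    exact neg_eq_zero.1 ((mul_eq_zero.1 h).resolve_left hκ)
  refine ⟨norm_eq_zero.1 (pow_eq_zero_iff two_ne_zero |>.1 ?_), hlam⟩
  rw [hlam] at hc
  linarith

end Orientation

theorem EuclideanSpace.rightAngleRotation_basisFun_orientation (x : EuclideanSpace ℝ (Fin 2)) :
    (EuclideanSpace.basisFun (Fin 2) ℝ).toBasis.orientation.rightAngleRotation x =
      (WithLp.equiv 2 (Fin 2 → ℝ)).symm ![-x 1, x 0] := by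
  have h : Orientation.map (Fin 2) Complex.orthonormalBasisOneI.repr.symm.toLinearEquiv
      (EuclideanSpace.basisFun (Fin 2) ℝ).toBasis.orientation = Complex.orientation := by
    rw [← Module.Basis.orientation_map]
    rfl
  apply Complex.orthonormalBasisOneI.repr.symm.injective
  rw [Orientation.rightAngleRotation_map_complex _ _ h]
  apply Complex.ext <;> simp

theorem cylindrical_translator_core_general (a b : ℝ)
    (γ' γ'' : ℝ → EuclideanSpace ℝ (Fin 2))
    (hγ' : ∀ s ∈ Set.Ioo a b, HasDerivAt γ' (γ'' s) s)
    (hunit : ∀ s ∈ Set.Ioo a b, ‖γ' s‖ = 1)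
    (n : ℝ → EuclideanSpace ℝ (Fin 2))
    (hn : ∀ s, n s = (WithLp.equiv 2 (Fin 2 → ℝ)).symm ![-(γ' s 1), γ' s 0])
    (κ : ℝ → ℝ) (hκ : ∀ s, κ s = ⟪γ'' s, n s⟫_ℝ)
    (u : EuclideanSpace ℝ (Fin 2)) (lam : ℝ)
    (heq : ∀ s ∈ Set.Ioo a b, ⟪n s, u⟫_ℝ + lam = 0) :
    (∀ s ∈ Set.Ioo a b, κ s = 0) ∨ (u = 0 ∧ lam = 0) := by
  set o := (EuclideanSpace.basisFun (Fin 2) ℝ).toBasis.orientation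
  have hJ : ∀ s, n s = o.rightAngleRotation (γ' s) := fun s => by
    rw [hn, EuclideanSpace.rightAngleRotation_basisFun_orientation]
  refine or_iff_not_imp_left.2 fun hcurved => ?_
  push Not at hcurved
  obtain ⟨s, hs, hκs⟩ := hcurved
  have hI : Set.Ioo a b ∈ 𝓝 s := Ioo_mem_nhds hs.1 hs.2
  refine o.eq_zero_of_inner_rightAngleRotation_add_eventually_eq_zero (hγ' s hs)
    (eventually_of_mem hI hunit) (eventually_of_mem hI fun t ht => by rw [← hJ]; exact heq t ht) ?_
  rwa [hκ, hJ] at hκs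

/-- If a unit-speed planar curve `γ` on an open interval satisfies
`⟪n(s), u⟫ + λ = 0` where `n` is its unit normal, then either its signed curvature
vanishes identically, or `u = 0` and `λ = 0`. -/
theorem cylindrical_translator_core (a b : ℝ) (hab : a < b)
    (γ γ' γ'' : ℝ → EuclideanSpace ℝ (Fin 2))
    (hγ : ∀ s ∈ Set.Ioo a b, HasDerivAt γ (γ' s) s)
    (hγ' : ∀ s ∈ Set.Ioo a b, HasDerivAt γ' (γ'' s) s)
    (hunit : ∀ s ∈ Set.Ioo a b, ‖γ' s‖ = 1)
    (n : ℝ → EuclideanSpace ℝ (Fin 2))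
    (hn : ∀ s, n s = (WithLp.equiv 2 (Fin 2 → ℝ)).symm ![-(γ' s 1), γ' s 0])
    (κ : ℝ → ℝ) (hκ : ∀ s, κ s = ⟪γ'' s, n s⟫_ℝ)
    (u : EuclideanSpace ℝ (Fin 2)) (lam : ℝ)
    (heq : ∀ s ∈ Set.Ioo a b, ⟪n s, u⟫_ℝ + lam = 0) :
    (∀ s ∈ Set.Ioo a b, κ s = 0) ∨ (u = 0 ∧ lam = 0) :=
  cylindrical_translator_core_general a b γ' γ'' hγ' hunit n hn κ hκ u lam heq
end

section
/- Let a, λ, c₁, c₂ be real numbers with a ≠ 0 and λ ≠ 0. Then it is impossible that for every t ∈ ℝ: −(a² + λ(a² + t²)²)/(a² + t²)² = (a·c₁ + t·c₂)/√(a² + t²). -/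
/-- For real numbers `a ≠ 0` and `λ ≠ 0`, the identity
`−(a² + λ(a² + t²)²)/(a² + t²)² = (a c₁ + t c₂)/√(a² + t²)` cannot hold for every `t ∈ ℝ`. -/
theorem no_noncylindrical_ruled_translator_identity
    (a lam c₁ c₂ : ℝ) (ha : a ≠ 0) (hlam : lam ≠ 0) :
    ¬ ∀ t : ℝ,
      -(a ^ 2 + lam * (a ^ 2 + t ^ 2) ^ 2) / (a ^ 2 + t ^ 2) ^ 2 =
        (a * c₁ + t * c₂) / Real.sqrt (a ^ 2 + t ^ 2) := by
  intro h
  have ha' : 0 < |a| := abs_pos.mpr ha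
  have key : ∀ u : ℝ, |a| ≤ u → lam * u ^ 5 + a * c₁ * u ^ 4 + a ^ 2 * u = 0 := by
    intro u hu
    have hu0 : 0 < u := lt_of_lt_of_le ha' hu
    have ht2nn : (0:ℝ) ≤ u ^ 2 - a ^ 2 := by
      have : a ^ 2 = |a| ^ 2 := (sq_abs a).symm
      nlinarith
    set t := Real.sqrt (u ^ 2 - a ^ 2) with ht
    have ht2 : t ^ 2 = u ^ 2 - a ^ 2 := Real.sq_sqrt ht2nn
    have hA : a ^ 2 + t ^ 2 = u ^ 2 := by linarith
    have h1 := h t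
    have h2 := h (-t)
    rw [neg_sq, hA] at h2
    rw [hA] at h1
    rw [Real.sqrt_sq hu0.le] at h1 h2
    have hu2 : (u ^ 2) ^ 2 ≠ 0 := by positivity
    have hun : u ≠ 0 := hu0.ne'
    field_simp at h1 h2
    nlinarith [h1, h2, sq_nonneg u, hu0]
  let P : Polynomial ℝ :=
    Polynomial.C lam * Polynomial.X ^ 5 + Polynomial.C (a * c₁) * Polynomial.X ^ 4 +
      Polynomial.C (a ^ 2) * Polynomial.X
  have hsub : Set.Ici |a| ⊆ {x | P.IsRoot x} := by
    intro u hu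
    have := key u hu
    simp only [Polynomial.IsRoot, P, Polynomial.eval_add, Polynomial.eval_mul,
      Polynomial.eval_C, Polynomial.eval_pow, Polynomial.eval_X, Set.mem_setOf_eq]
    linarith
  have hP : P = 0 :=
    Polynomial.eq_zero_of_infinite_isRoot P ((Set.Ici_infinite |a|).mono hsub)
  have hc : P.coeff 5 = lam := by
    simp only [P, Polynomial.coeff_add, Polynomial.coeff_C_mul, Polynomial.coeff_X_pow,
      Polynomial.coeff_X]
    norm_num
  rw [hP] at hc
  simp at hc
  exact hlam hc.symm
end

section
/- Let I, J ⊆ ℝ be nonempty open intervals, let f : ℝ → ℝ and g : ℝ → ℝ be three times continuously differentiable on I and J respectively, let v₁, v₂, v₃ ∈ ℝ with v₁² + v₂² + v₃² = 1, and let λ ∈ ℝ with λ ≠ 0. Suppose that for every x ∈ I and every y ∈ J: f''(x)·g''(y) = (1 + f'(x)² + g'(y)²)^{3/2}·(v₃ − v₁ f'(x) − v₂ g'(y)) + λ·(1 + f'(x)² + g'(y)²)². Then f''(x) = 0 for every x ∈ I, or g''(y) = 0 for every y ∈ J. -/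
/-!
Where `f''(x₀) ≠ 0` and `g''(y₀) ≠ 0`, the maps `f'` and `g'` are open near `x₀` and `y₀`.
Writing `H(p, q)` for the right-hand side of the equation, so that
`f''(x) g''(y) = H(f'(x), g'(y))`, this gives the separation identity
`H(p, q) H(p₀, q₀) = H(p, q₀) H(p₀, q)` near `(p₀, q₀)`, and since `H` is real analytic on `ℝ²`
it holds everywhere. For every `q`, `H(p, q) / p⁴ → λ ∓ v₁` as `p → ±∞`; since `λ ≠ 0` one of
these limits is nonzero, so dividing the identity by `p⁴` forces `H(p₀, ·)` to be constant. But
the same asymptotics in `q` give `H(p₀, q) / q⁴ → λ ∓ v₂`, and these cannot both vanish.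
-/

open Filter Topology Set
open scoped ContDiff

noncomputable def translatorRHS (v₁ v₂ v₃ lam p q : ℝ) : ℝ :=
  (1 + p ^ 2 + q ^ 2) ^ ((3 : ℝ) / 2) * (v₃ - v₁ * p - v₂ * q)
    + lam * (1 + p ^ 2 + q ^ 2) ^ 2

theorem ContDiff.mul_eq_mul_of_eventually {E F : Type*} [NormedAddCommGroup E] [NormedSpace ℝ E]
    [NormedAddCommGroup F] [NormedSpace ℝ F] {H : E → F → ℝ}
    (hH : ContDiff ℝ ω fun z : E × F => H z.1 z.2) {p₀ : E} {q₀ : F}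
    (h : ∀ᶠ z in 𝓝 (p₀, q₀), H z.1 z.2 * H p₀ q₀ = H z.1 q₀ * H p₀ z.2) (p : E) (q : F) :
    H p q * H p₀ q₀ = H p q₀ * H p₀ q := by
  have hG : ContDiff ℝ ω fun z : E × F => H z.1 q₀ * H p₀ z.2 :=
    (hH.comp (contDiff_fst.prodMk contDiff_const)).mul
      (hH.comp (contDiff_const.prodMk contDiff_snd))
  exact congrFun ((hH.mul contDiff_const).analyticOnNhd.eq_of_eventuallyEq hG.analyticOnNhd h)
    (p, q)

section translatorRHS

variable (v₁ v₂ v₃ lam : ℝ)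

theorem translatorRHS_swap (p q : ℝ) :
    translatorRHS v₁ v₂ v₃ lam p q = translatorRHS v₂ v₁ v₃ lam q p := by
  unfold translatorRHS
  ring_nf

theorem translatorRHS_neg_left (p q : ℝ) :
    translatorRHS v₁ v₂ v₃ lam (-p) q = translatorRHS (-v₁) v₂ v₃ lam p q := by
  unfold translatorRHS
  ring_nf

theorem ContDiff.translatorRHS {E : Type*} [NormedAddCommGroup E] [NormedSpace ℝ E]
    {n : WithTop ℕ∞} {α β : E → ℝ} (hα : ContDiff ℝ n α) (hβ : ContDiff ℝ n β) :
    ContDiff ℝ n (fun z => translatorRHS v₁ v₂ v₃ lam (α z) (β z)) := by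
  have hW : ContDiff ℝ n (fun z => 1 + α z ^ 2 + β z ^ 2) := by fun_prop
  have hW32 := hW.rpow_const_of_ne (p := (3 : ℝ) / 2) fun z => by positivity
  unfold _root_.translatorRHS
  fun_prop

theorem tendsto_translatorRHS_div_pow_four_atTop (q : ℝ) :
    Tendsto (fun p => translatorRHS v₁ v₂ v₃ lam p q / p ^ 4) atTop (𝓝 (lam - v₁)) := by
  have hW : Tendsto (fun p : ℝ => (1 + p ^ 2 + q ^ 2) / p ^ 2) atTop (𝓝 1) := by
    have h := (tendsto_const_nhds (x := (1 + q ^ 2))).div_atTop (tendsto_pow_atTop two_ne_zero)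
    have h1 : Tendsto (fun p : ℝ => 1 + (1 + q ^ 2) / p ^ 2) atTop (𝓝 1) := by
      simpa using h.const_add 1
    refine h1.congr' ?_
    filter_upwards [eventually_ne_atTop 0] with p hp
    field_simp
    ring
  have hlin : Tendsto (fun p : ℝ => (v₃ - v₂ * q) / p - v₁) atTop (𝓝 (-v₁)) := by
    simpa using (tendsto_const_nhds.div_atTop tendsto_id).sub_const v₁
  have h := ((hW.rpow_const (p := (3 : ℝ) / 2) (Or.inr (by norm_num))).mul hlin).add
    ((hW.pow 2).const_mul lam)
  rw [show (1 : ℝ) ^ ((3 : ℝ) / 2) * -v₁ + lam * 1 ^ 2 = lam - v₁ by simp; ring] at h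
  refine h.congr' ?_
  filter_upwards [eventually_gt_atTop 0] with p hp
  have hp3 : (p ^ 2) ^ ((3 : ℝ) / 2) = p ^ 3 := by
    rw [← Real.rpow_natCast, ← Real.rpow_mul hp.le]
    norm_num
  rw [Real.div_rpow (by positivity) (by positivity), hp3, translatorRHS]
  field_simp
  ring

theorem tendsto_translatorRHS_div_pow_four_atBot (q : ℝ) :
    Tendsto (fun p => translatorRHS v₁ v₂ v₃ lam p q / p ^ 4) atBot (𝓝 (lam + v₁)) := by
  have h := (tendsto_translatorRHS_div_pow_four_atTop (-v₁) v₂ v₃ lam q).comp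
    tendsto_neg_atBot_atTop
  rw [sub_neg_eq_add] at h
  refine h.congr fun p => ?_
  simp [translatorRHS_neg_left, Even.neg_pow (by decide : Even 4)]

theorem translatorRHS_eq_of_separated (hlam : lam ≠ 0) {p₀ q₀ : ℝ}
    (h : ∀ p q, translatorRHS v₁ v₂ v₃ lam p q * translatorRHS v₁ v₂ v₃ lam p₀ q₀ =
      translatorRHS v₁ v₂ v₃ lam p q₀ * translatorRHS v₁ v₂ v₃ lam p₀ q) (q : ℝ) :
    translatorRHS v₁ v₂ v₃ lam p₀ q = translatorRHS v₁ v₂ v₃ lam p₀ q₀ := by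
  set C := translatorRHS v₁ v₂ v₃ lam p₀ q₀
  have hlim : ∀ {l : Filter ℝ} [l.NeBot] {L : ℝ},
      (∀ q', Tendsto (fun p => translatorRHS v₁ v₂ v₃ lam p q' / p ^ 4) l (𝓝 L)) →
      L * C = L * translatorRHS v₁ v₂ v₃ lam p₀ q := fun hL =>
    tendsto_nhds_unique (((hL q).mul_const C).congr fun p => by
        rw [div_mul_eq_mul_div, h, mul_div_right_comm])
      ((hL q₀).mul_const _)
  have htop := hlim (tendsto_translatorRHS_div_pow_four_atTop v₁ v₂ v₃ lam)
  have hbot := hlim (tendsto_translatorRHS_div_pow_four_atBot v₁ v₂ v₃ lam)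
  have : 2 * lam * (translatorRHS v₁ v₂ v₃ lam p₀ q - C) = 0 := by linear_combination -(htop + hbot)
  simpa [hlam, sub_eq_zero] using this

theorem exists_translatorRHS_ne (hlam : lam ≠ 0) (p₀ C : ℝ) :
    ∃ q, translatorRHS v₁ v₂ v₃ lam p₀ q ≠ C := by
  by_contra! h
  have hlim : ∀ {l : Filter ℝ} [l.NeBot] {L : ℝ},
      Tendsto (fun q => translatorRHS v₂ v₁ v₃ lam q p₀ / q ^ 4) l (𝓝 L) →
      Tendsto (fun q : ℝ => q⁻¹) l (𝓝 0) → L = 0 := fun hL hinv =>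
    tendsto_nhds_unique hL <| by
      simpa [← translatorRHS_swap, h, div_eq_mul_inv] using (hinv.pow 4).const_mul C
  have htop := hlim (tendsto_translatorRHS_div_pow_four_atTop v₂ v₁ v₃ lam p₀)
    tendsto_inv_atTop_zero
  have hbot := hlim (tendsto_translatorRHS_div_pow_four_atBot v₂ v₁ v₃ lam p₀)
    tendsto_inv_atBot_zero
  exact hlam (by linarith)

theorem translatorRHS_not_separated (hlam : lam ≠ 0) (p₀ q₀ : ℝ) :
    ¬ ∀ᶠ z in 𝓝 (p₀, q₀), translatorRHS v₁ v₂ v₃ lam z.1 z.2 * translatorRHS v₁ v₂ v₃ lam p₀ q₀ =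
      translatorRHS v₁ v₂ v₃ lam z.1 q₀ * translatorRHS v₁ v₂ v₃ lam p₀ z.2 := fun h =>
  have ⟨q, hq⟩ := exists_translatorRHS_ne v₁ v₂ v₃ lam hlam p₀ (translatorRHS v₁ v₂ v₃ lam p₀ q₀)
  hq (translatorRHS_eq_of_separated v₁ v₂ v₃ lam hlam
    ((contDiff_fst.translatorRHS v₁ v₂ v₃ lam contDiff_snd).mul_eq_mul_of_eventually h) q)

end translatorRHS

theorem image_deriv_mem_nhds {f : ℝ → ℝ} {s : Set ℝ} {x : ℝ} (hs : IsOpen s)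
    (hf : ContDiffOn ℝ 2 f s) (hx : x ∈ s) (hf'' : deriv (deriv f) x ≠ 0) :
    deriv f '' s ∈ 𝓝 (deriv f x) := by
  have hf' : ContDiffAt ℝ 1 (deriv f) x :=
    (hf.deriv_of_isOpen hs (by norm_num)).contDiffAt (hs.mem_nhds hx)
  rw [← (hf'.hasStrictDerivAt one_ne_zero).map_nhds_eq hf'']
  exact image_mem_map (hs.mem_nhds hx)

theorem translation_translator_is_cylindrical_general
    (a b c d : ℝ)
    (f g : ℝ → ℝ)
    (hf : ContDiffOn ℝ 3 f (Set.Ioo a b))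
    (hg : ContDiffOn ℝ 3 g (Set.Ioo c d))
    (v₁ v₂ v₃ lam : ℝ) (hlam : lam ≠ 0)
    (heq : ∀ x ∈ Set.Ioo a b, ∀ y ∈ Set.Ioo c d,
      deriv (deriv f) x * deriv (deriv g) y =
        (1 + deriv f x ^ 2 + deriv g y ^ 2) ^ ((3 : ℝ) / 2) *
          (v₃ - v₁ * deriv f x - v₂ * deriv g y)
        + lam * (1 + deriv f x ^ 2 + deriv g y ^ 2) ^ 2) :
    (∀ x ∈ Set.Ioo a b, deriv (deriv f) x = 0) ∨
      (∀ y ∈ Set.Ioo c d, deriv (deriv g) y = 0) := by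
  by_contra! ⟨⟨x₀, hx₀, hfx₀⟩, ⟨y₀, hy₀, hgy₀⟩⟩
  have hH : ∀ x ∈ Ioo a b, ∀ y ∈ Ioo c d, translatorRHS v₁ v₂ v₃ lam (deriv f x) (deriv g y) =
      deriv (deriv f) x * deriv (deriv g) y := fun x hx y hy => (heq x hx y hy).symm
  have hU := image_deriv_mem_nhds isOpen_Ioo (hf.of_le (by norm_num)) hx₀ hfx₀
  have hV := image_deriv_mem_nhds isOpen_Ioo (hg.of_le (by norm_num)) hy₀ hgy₀
  refine translatorRHS_not_separated v₁ v₂ v₃ lam hlam (deriv f x₀) (deriv g y₀) ?_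
  filter_upwards [prod_mem_nhds hU hV] with z ⟨⟨x, hx, hxz⟩, ⟨y, hy, hyz⟩⟩
  rw [← hxz, ← hyz, hH x hx y hy, hH x hx y₀ hy₀, hH x₀ hx₀ y hy, hH x₀ hx₀ y₀ hy₀]
  ring

/-- If `z = f(x) + g(y)` defines a `λ`-translator with `λ ≠ 0` and unit
speed `(v₁, v₂, v₃)`, i.e. `f'' g'' = (1 + f'² + g'²)^{3/2} (v₃ − v₁ f' − v₂ g')
+ λ (1 + f'² + g'²)²` on `I × J`, then `f'' ≡ 0` on `I` or `g'' ≡ 0` on `J`. -/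
theorem translation_translator_is_cylindrical
    (a b c d : ℝ) (hab : a < b) (hcd : c < d)
    (f g : ℝ → ℝ)
    (hf : ContDiffOn ℝ 3 f (Set.Ioo a b))
    (hg : ContDiffOn ℝ 3 g (Set.Ioo c d))
    (v₁ v₂ v₃ lam : ℝ) (hv : v₁ ^ 2 + v₂ ^ 2 + v₃ ^ 2 = 1) (hlam : lam ≠ 0)
    (heq : ∀ x ∈ Set.Ioo a b, ∀ y ∈ Set.Ioo c d,
      deriv (deriv f) x * deriv (deriv g) y =
        (1 + deriv f x ^ 2 + deriv g y ^ 2) ^ ((3 : ℝ) / 2) *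
          (v₃ - v₁ * deriv f x - v₂ * deriv g y)
        + lam * (1 + deriv f x ^ 2 + deriv g y ^ 2) ^ 2) :
    (∀ x ∈ Set.Ioo a b, deriv (deriv f) x = 0) ∨
      (∀ y ∈ Set.Ioo c d, deriv (deriv g) y = 0) :=
  translation_translator_is_cylindrical_general a b c d f g hf hg v₁ v₂ v₃ lam hlam heq
end

section
/- Let I ⊆ ℝ be a nonempty interval, let x, z : ℝ → ℝ be differentiable on I with x(s) > 0 for all s ∈ I, let κ : ℝ → ℝ be any function, and let v₁, v₂, v₃, λ ∈ ℝ. Suppose that for every s ∈ I and every t ∈ ℝ: −v₁ z'(s) cos t − v₂ z'(s) sin t + v₃ x'(s) − (z'(s)/x(s)) κ(s) + λ = 0. Then either z'(s) = 0 for every s ∈ I, or v₁ = 0 and v₂ = 0. -/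
/-- If the generating data of a rotational surface satisfies
`−v₁ z' cos t − v₂ z' sin t + v₃ x' − (z'/x) κ + λ = 0` for all `s ∈ I` and all `t`,
then either `z' ≡ 0` on `I`, or `v₁ = 0` and `v₂ = 0`. -/
theorem rotational_translator_axis_core
    (I : Set ℝ) (hne : I.Nonempty) (hI : I.OrdConnected)
    (x z x' z' κ : ℝ → ℝ) (v₁ v₂ v₃ lam : ℝ)
    (hx : ∀ s ∈ I, HasDerivWithinAt x (x' s) I s)
    (hz : ∀ s ∈ I, HasDerivWithinAt z (z' s) I s)
    (hxpos : ∀ s ∈ I, 0 < x s)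
    (heq : ∀ s ∈ I, ∀ t : ℝ,
      -v₁ * z' s * Real.cos t - v₂ * z' s * Real.sin t + v₃ * x' s
        - (z' s / x s) * κ s + lam = 0) :
    (∀ s ∈ I, z' s = 0) ∨ (v₁ = 0 ∧ v₂ = 0) := by
  have key : ∀ s ∈ I, v₁ * z' s = 0 ∧ v₂ * z' s = 0 := by
    intro s hs
    have h0 := heq s hs 0
    have hpi := heq s hs Real.pi
    have h2 := heq s hs (Real.pi / 2)
    have h32 := heq s hs (-(Real.pi / 2))
    simp [Real.cos_pi, Real.sin_pi, Real.cos_pi_div_two, Real.sin_pi_div_two] at h0 hpi h2 h32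
    constructor <;> nlinarith [h0, hpi, h2, h32]
  by_cases hz0 : ∀ s ∈ I, z' s = 0
  · exact Or.inl hz0
  · right
    push_neg at hz0
    obtain ⟨s, hs, hzs⟩ := hz0
    obtain ⟨h1, h2⟩ := key s hs
    exact ⟨(mul_eq_zero.mp h1).resolve_right hzs, (mul_eq_zero.mp h2).resolve_right hzs⟩
end

section
/- Let λ ∈ ℝ and δ > 0, and let u : ℝ → ℝ be twice continuously differentiable on [0, δ) with u(0) = 0 and u'(0) = 0. Suppose that for every r ∈ (0, δ): u'(r)·u''(r) = r·(1 + u'(r)²)²·(1/√(1 + u'(r)²) + λ). Then u''(0)² = 1 + λ. -/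
/-!
Near the axis the slope `u'(r)/r` tends to `u''(0)` and `u''(r)` tends to `u''(0)` as well, so
dividing the equation by `r` gives `u''(0)² = lim (1 + u'²)² (1/√(1 + u'²) + λ) = 1 + λ`,
because `u'(r) → u'(0) = 0`.
-/

open Filter Topology Set

theorem tendsto_div_self_nhdsGT_of_hasDerivWithinAt {f : ℝ → ℝ} {a : ℝ}
    (hf : HasDerivWithinAt f a (Ioi 0) 0) (h0 : f 0 = 0) :
    Tendsto (fun r => f r / r) (𝓝[>] 0) (𝓝 a) := by
  refine ((hasDerivWithinAt_iff_tendsto_slope' self_notMem_Ioi).mp hf).congr fun r => ?_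
  simp [slope_def_field, h0]

theorem sq_eq_of_mul_deriv_eq_mul {f f' G : ℝ → ℝ} {a : ℝ}
    (hf : HasDerivWithinAt f a (Ioi 0) 0) (h0 : f 0 = 0)
    (hf' : Tendsto f' (𝓝[>] 0) (𝓝 a)) (hG : ContinuousAt G 0)
    (heq : ∀ᶠ r in 𝓝[>] 0, f r * f' r = r * G (f r)) :
    a ^ 2 = G 0 := by
  have hslope := tendsto_div_self_nhdsGT_of_hasDerivWithinAt hf h0
  have hf_zero : Tendsto f (𝓝[>] 0) (𝓝 0) := by
    simpa only [h0] using hf.continuousWithinAt.tendsto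
  refine tendsto_nhds_unique (f := fun r => f r / r * f' r)
    (by simpa [sq] using hslope.mul hf') ?_
  refine (hG.tendsto.comp hf_zero).congr' ?_
  filter_upwards [heq, self_mem_nhdsWithin] with r hr hpos
  rw [Function.comp_apply, div_mul_eq_mul_div, hr, mul_div_cancel_left₀ _ (ne_of_gt hpos)]

theorem rotational_translator_second_derivative_at_axis_general
    (lam δ : ℝ) (hδ : 0 < δ) (u' u'' : ℝ → ℝ)
    (hu' : ∀ r ∈ Set.Ico (0 : ℝ) δ, HasDerivWithinAt u' (u'' r) (Set.Ico (0 : ℝ) δ) r)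
    (hcont : ContinuousOn u'' (Set.Ico (0 : ℝ) δ))
    (h1 : u' 0 = 0)
    (heq : ∀ r ∈ Set.Ioo (0 : ℝ) δ,
      u' r * u'' r =
        r * (1 + u' r ^ 2) ^ 2 * (1 / Real.sqrt (1 + u' r ^ 2) + lam)) :
    u'' 0 ^ 2 = 1 + lam := by
  have h0mem : (0 : ℝ) ∈ Ico 0 δ := ⟨le_rfl, hδ⟩
  have hIco : Ico 0 δ ∈ 𝓝[>] (0 : ℝ) := Ico_mem_nhdsGT hδ
  have hG : Continuous fun p : ℝ => (1 + p ^ 2) ^ 2 * (1 / √(1 + p ^ 2) + lam) := by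
    fun_prop (disch := intro; positivity)
  have heq' : ∀ᶠ r in 𝓝[>] 0,
      u' r * u'' r = r * ((1 + u' r ^ 2) ^ 2 * (1 / √(1 + u' r ^ 2) + lam)) := by
    filter_upwards [Ioo_mem_nhdsGT hδ] with r hr
    rw [heq r hr, mul_assoc]
  simpa using sq_eq_of_mul_deriv_eq_mul ((hu' 0 h0mem).mono_of_mem_nhdsWithin hIco) h1
    ((hcont 0 h0mem).mono_of_mem_nhdsWithin hIco) hG.continuousAt heq'

/-- If `u` is `C²` on `[0, δ)` with `u(0) = u'(0) = 0` and satisfies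
`u' u'' = r (1 + u'²)² (1/√(1 + u'²) + λ)` on `(0, δ)`, then `u''(0)² = 1 + λ`. -/
theorem rotational_translator_second_derivative_at_axis
    (lam δ : ℝ) (hδ : 0 < δ) (u u' u'' : ℝ → ℝ)
    (hu : ∀ r ∈ Set.Ico (0 : ℝ) δ, HasDerivWithinAt u (u' r) (Set.Ico (0 : ℝ) δ) r)
    (hu' : ∀ r ∈ Set.Ico (0 : ℝ) δ, HasDerivWithinAt u' (u'' r) (Set.Ico (0 : ℝ) δ) r)
    (hcont : ContinuousOn u'' (Set.Ico (0 : ℝ) δ))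
    (h0 : u 0 = 0) (h1 : u' 0 = 0)
    (heq : ∀ r ∈ Set.Ioo (0 : ℝ) δ,
      u' r * u'' r =
        r * (1 + u' r ^ 2) ^ 2 * (1 / Real.sqrt (1 + u' r ^ 2) + lam)) :
    u'' 0 ^ 2 = 1 + lam :=
  rotational_translator_second_derivative_at_axis_general lam δ hδ u' u'' hu' hcont h1 heq
end

section
/- Let λ < −1 and δ > 0. There is no function u : ℝ → ℝ that is twice continuously differentiable on [0, δ) with u(0) = 0, u'(0) = 0 and satisfying, for every r ∈ (0, δ): u'(r)·u''(r) = r·(1 + u'(r)²)²·(1/√(1 + u'(r)²) + λ). -/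
/-! The equation forces `u' u'' < 0` on `(0, δ)` when `λ < -1`, since `1/√(1 + u'²) ≤ 1`.
Hence `u'²` is strictly decreasing on `[0, δ)`; as it vanishes at `0`, it would be negative
on `(0, δ)`, which is absurd. -/

open Set

theorem strictAntiOn_sq_of_mul_deriv_neg {D : Set ℝ} (hD : Convex ℝ D) {g g' : ℝ → ℝ}
    (hg : ∀ x ∈ D, HasDerivWithinAt g (g' x) D x)
    (hneg : ∀ x ∈ interior D, g x * g' x < 0) :
    StrictAntiOn (fun x => g x ^ 2) D :=
  strictAntiOn_of_hasDerivWithinAt_neg hD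
    (fun x hx => (hg x hx).continuousWithinAt.pow 2)
    (fun x hx => ((hg x (interior_subset hx)).mono interior_subset).pow 2)
    (fun x hx => by
      have := hneg x hx
      simp only [Nat.cast_ofNat, Nat.add_one_sub_one, pow_one]
      linarith)

theorem one_div_sqrt_one_add_sq_le_one (p : ℝ) : 1 / √(1 + p ^ 2) ≤ 1 :=
  div_le_one_of_le₀ (Real.one_le_sqrt.2 (by nlinarith [sq_nonneg p])) (Real.sqrt_nonneg _)

theorem mul_one_add_sq_sq_mul_one_div_sqrt_add_neg {lam r : ℝ} (hlam : lam < -1) (hr : 0 < r)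
    (p : ℝ) : r * (1 + p ^ 2) ^ 2 * (1 / √(1 + p ^ 2) + lam) < 0 :=
  mul_neg_of_pos_of_neg (by positivity) (by linarith [one_div_sqrt_one_add_sq_le_one p])

/-- For `λ < −1` there is no `C²` function `u` on `[0, δ)` with
`u(0) = u'(0) = 0` satisfying `u' u'' = r (1 + u'²)² (1/√(1 + u'²) + λ)` on `(0, δ)`. -/
theorem no_rotational_translator_orthogonal_to_axis_of_lt_neg_one
    (lam δ : ℝ) (hlam : lam < -1) (hδ : 0 < δ) :
    ¬ ∃ u u' u'' : ℝ → ℝ,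
      (∀ r ∈ Set.Ico (0 : ℝ) δ, HasDerivWithinAt u (u' r) (Set.Ico (0 : ℝ) δ) r) ∧
      (∀ r ∈ Set.Ico (0 : ℝ) δ, HasDerivWithinAt u' (u'' r) (Set.Ico (0 : ℝ) δ) r) ∧
      ContinuousOn u'' (Set.Ico (0 : ℝ) δ) ∧
      u 0 = 0 ∧ u' 0 = 0 ∧
      (∀ r ∈ Set.Ioo (0 : ℝ) δ,
        u' r * u'' r =
          r * (1 + u' r ^ 2) ^ 2 * (1 / Real.sqrt (1 + u' r ^ 2) + lam)) := by
  rintro ⟨-, u', u'', -, hu', -, -, hu'0, heq⟩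
  have hanti : StrictAntiOn (fun r => u' r ^ 2) (Ico 0 δ) := by
    refine strictAntiOn_sq_of_mul_deriv_neg (convex_Ico 0 δ) hu' fun r hr => ?_
    rw [interior_Ico] at hr
    rw [heq r hr]
    exact mul_one_add_sq_sq_mul_one_div_sqrt_add_neg hlam hr.1 _
  have hlt : u' (δ / 2) ^ 2 < u' 0 ^ 2 :=
    hanti (left_mem_Ico.2 hδ) ⟨by linarith, by linarith⟩ (half_pos hδ)
  rw [hu'0] at hlt
  linarith [sq_nonneg (u' (δ / 2))]
end

section
/- Let λ > −1. Then there exist R > 0 and a function u : ℝ → ℝ that is twice continuously differentiable on [0, R], with u(0) = 0, u'(0) = 0, u''(0) = √(1 + λ), and satisfying, for every r ∈ (0, R]: u'(r)·u''(r) = r·(1 + u'(r)²)²·(1/√(1 + u'(r)²) + λ). -/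
/-!
Writing `w = u'²`, the equation becomes the regular first-order equation `w' = 2 r F(w)`
with `F(w) = (1 + w)² (1/√(1 + w) + λ)` and `F(0) = 1 + λ > 0`. The substitution
`w(r) = v(r²)` makes it autonomous, `v' = F(v)`, `v(0) = 0`, which Picard–Lindelöf solves
near `0` since `F` is `C¹` there. With `D = dslope v 0` (so `v(s) = s D(s)`, `D` continuous,
`D(0) = F(0)`) take `u' = r √(D(r²)) = √(v(r²))` and `u'' = F(v(r²)) / √(D(r²))`, which is
continuous and equals `√(1 + λ)` at `0`; `u` is then the primitive of `u'`.
-/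

open Set Filter Topology

theorem hasDerivAt_mul_of_continuousAt_zero {𝕜 : Type*} [NontriviallyNormedField 𝕜]
    {φ : 𝕜 → 𝕜} (hφ : ContinuousAt φ 0) :
    HasDerivAt (fun y => y * φ y) (φ 0) 0 := by
  rw [hasDerivAt_iff_tendsto_slope]
  refine (hφ.tendsto.mono_left nhdsWithin_le_nhds).congr' ?_
  filter_upwards [self_mem_nhdsWithin] with y (hy : y ≠ 0)
  simp [slope, hy]

theorem DifferentiableAt.continuousAt_dslope {𝕜 E : Type*} [NontriviallyNormedField 𝕜]
    [NormedAddCommGroup E] [NormedSpace 𝕜 E] {f : 𝕜 → E} {a b : 𝕜}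
    (hf : DifferentiableAt 𝕜 f b) : ContinuousAt (dslope f a) b := by
  rcases eq_or_ne b a with rfl | hba
  · exact continuousAt_dslope_same.2 hf
  · exact (continuousAt_dslope_of_ne hba).2 hf.continuousAt

theorem ContinuousOn.hasDerivWithinAt_integral_Icc {E : Type*} [NormedAddCommGroup E]
    [NormedSpace ℝ E] [CompleteSpace E] {f : ℝ → E} {a b x : ℝ}
    (hf : ContinuousOn f (Icc a b)) (hx : x ∈ Icc a b) :
    HasDerivWithinAt (fun t => ∫ s in a..t, f s) (f x) (Icc a b) x := by
  have : Fact (x ∈ Icc a b) := ⟨hx⟩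
  exact intervalIntegral.integral_hasDerivWithinAt_right
    ((hf.mono (Icc_subset_Icc le_rfl hx.2)).intervalIntegrable_of_Icc hx.1)
    (hf.stronglyMeasurableAtFilter_nhdsWithin measurableSet_Icc x) (hf x hx)

section SqrtProfile

noncomputable def sqrtProfile (v : ℝ → ℝ) (r : ℝ) : ℝ :=
  r * Real.sqrt (dslope v 0 (r ^ 2))

noncomputable def sqrtProfileDeriv (g v : ℝ → ℝ) (r : ℝ) : ℝ :=
  g (v (r ^ 2)) / Real.sqrt (dslope v 0 (r ^ 2))

variable {g v : ℝ → ℝ} {r : ℝ}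

theorem sqrtProfile_zero (v : ℝ → ℝ) : sqrtProfile v 0 = 0 := by
  simp [sqrtProfile]

theorem sqrtProfileDeriv_zero (hv : HasDerivAt v (g (v 0)) 0) :
    sqrtProfileDeriv g v 0 = Real.sqrt (g (v 0)) := by
  simp [sqrtProfileDeriv, dslope_same, hv.deriv, Real.div_sqrt]

theorem sq_mul_dslope_sq (hv0 : v 0 = 0) (r : ℝ) : r ^ 2 * dslope v 0 (r ^ 2) = v (r ^ 2) := by
  simpa using sub_smul_dslope_of_zero hv0 (r ^ 2)

theorem sqrtProfile_eq_sqrt (hv0 : v 0 = 0) (hr : 0 ≤ r) :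
    sqrtProfile v r = Real.sqrt (v (r ^ 2)) := by
  rw [sqrtProfile, ← sq_mul_dslope_sq hv0, Real.sqrt_mul (sq_nonneg r), Real.sqrt_sq hr]

theorem sqrtProfile_sq (hv0 : v 0 = 0) (hD : 0 ≤ dslope v 0 (r ^ 2)) :
    sqrtProfile v r ^ 2 = v (r ^ 2) := by
  rw [sqrtProfile, mul_pow, Real.sq_sqrt hD, sq_mul_dslope_sq hv0]

theorem continuousAt_dslope_comp_sq (hv : DifferentiableAt ℝ v (r ^ 2)) :
    ContinuousAt (fun y : ℝ => dslope v 0 (y ^ 2)) r :=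
  (hv.continuousAt_dslope (a := 0)).comp (f := fun y : ℝ => y ^ 2) (continuous_pow 2).continuousAt

theorem hasDerivAt_sqrtProfile (hv0 : v 0 = 0) (hv : HasDerivAt v (g (v (r ^ 2))) (r ^ 2))
    (hD : 0 < dslope v 0 (r ^ 2)) (hr : 0 ≤ r) :
    HasDerivAt (sqrtProfile v) (sqrtProfileDeriv g v r) r := by
  rcases hr.eq_or_lt with rfl | hr
  · rw [zero_pow two_ne_zero] at hv
    refine (hasDerivAt_mul_of_continuousAt_zero
      (continuousAt_dslope_comp_sq (by simpa using hv.differentiableAt)).sqrt).congr_deriv ?_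
    simp [sqrtProfileDeriv_zero hv, dslope_same, hv.deriv, hv0]
  · have hv_pos : 0 < v (r ^ 2) := by rw [← sq_mul_dslope_sq hv0]; positivity
    refine (((hv.comp r (h := fun y : ℝ => y ^ 2) (hasDerivAt_pow 2 r)).sqrt
      hv_pos.ne').congr_of_eventuallyEq ?_).congr_deriv ?_
    · filter_upwards [lt_mem_nhds hr] with y hy using sqrtProfile_eq_sqrt hv0 hy.le
    · simp only [Function.comp_def, sqrtProfileDeriv]
      rw [← sqrtProfile_eq_sqrt hv0 hr.le, sqrtProfile]
      field_simp
      norm_num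
      ring

theorem continuousAt_sqrtProfileDeriv (hv : HasDerivAt v (g (v (r ^ 2))) (r ^ 2))
    (hg : ContinuousAt g (v (r ^ 2))) (hD : 0 < dslope v 0 (r ^ 2)) :
    ContinuousAt (sqrtProfileDeriv g v) r :=
  (hg.comp (f := fun y : ℝ => v (y ^ 2))
    (hv.continuousAt.comp (f := fun y : ℝ => y ^ 2) (continuous_pow 2).continuousAt)).div
    (continuousAt_dslope_comp_sq hv.differentiableAt).sqrt (Real.sqrt_pos.2 hD).ne'

theorem sqrtProfile_mul_sqrtProfileDeriv (hv0 : v 0 = 0) (hD : 0 < dslope v 0 (r ^ 2)) :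
    sqrtProfile v r * sqrtProfileDeriv g v r = r * g (sqrtProfile v r ^ 2) := by
  have := (Real.sqrt_pos.2 hD).ne'
  rw [sqrtProfile_sq hv0 hD.le, sqrtProfile, sqrtProfileDeriv]
  field_simp

end SqrtProfile

theorem exists_integral_curve_of_contDiffAt_of_pos {g : ℝ → ℝ} (hg : ContDiffAt ℝ 1 g 0)
    (hg0 : 0 < g 0) :
    ∃ R > 0, ∃ v : ℝ → ℝ, v 0 = 0 ∧ ∀ r ∈ Icc 0 R,
      HasDerivAt v (g (v (r ^ 2))) (r ^ 2) ∧ ContinuousAt g (v (r ^ 2)) ∧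
        0 < dslope v 0 (r ^ 2) := by
  obtain ⟨v, hv0, ε, hε, hv⟩ :=
    hg.exists_forall_mem_closedBall_exists_eq_forall_mem_Ioo_hasDerivAt₀ 0
  have hv_deriv : ∀ᶠ s in 𝓝 0, HasDerivAt v (g (v s)) s :=
    eventually_of_mem (Ioo_mem_nhds (by linarith) (by linarith)) hv
  have hg_cont : ∀ᶠ s in 𝓝 0, ContinuousAt g (v s) := by
    have hv_cont : Tendsto v (𝓝 0) (𝓝 0) := by
      simpa [hv0] using hv_deriv.self_of_nhds.continuousAt.tendsto
    exact (hv_cont.eventually (hg.eventually (by simp))).mono fun s hs => hs.continuousAt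
  have hD_pos : ∀ᶠ s in 𝓝 0, 0 < dslope v 0 s := by
    have hD0 : dslope v 0 0 = g 0 := by rw [dslope_same, hv_deriv.self_of_nhds.deriv, hv0]
    exact (hv_deriv.self_of_nhds.differentiableAt.continuousAt_dslope (a := 0)).eventually
      (lt_mem_nhds (hD0 ▸ hg0))
  have hsq : Tendsto (fun r : ℝ => r ^ 2) (𝓝 0) (𝓝 0) :=
    (continuous_pow 2).tendsto' 0 0 (by simp)
  obtain ⟨R, hR, hP⟩ := nhdsGE_basis_Icc.eventually_iff.mp
    ((hsq.eventually (hv_deriv.and (hg_cont.and hD_pos))).filter_mono nhdsWithin_le_nhds)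
  exact ⟨R, hR, v, hv0, fun r hr => hP hr⟩

/-- With `w = u'²`, the profile equation reads `w' = 2 r · translatorRhs λ w`. -/
noncomputable def translatorRhs (lam w : ℝ) : ℝ :=
  (1 + w) ^ 2 * (1 / Real.sqrt (1 + w) + lam)

theorem translatorRhs_zero (lam : ℝ) : translatorRhs lam 0 = 1 + lam := by
  simp [translatorRhs]

theorem contDiffAt_translatorRhs {lam w : ℝ} {n : WithTop ℕ∞} (hw : -1 < w) :
    ContDiffAt ℝ n (translatorRhs lam) w := by
  have hpos : 0 < 1 + w := by linarith
  have hsqrt : ContDiffAt ℝ n (fun x : ℝ => Real.sqrt (1 + x)) w :=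
    (Real.contDiffAt_sqrt hpos.ne').comp w (contDiffAt_const.add contDiffAt_id)
  exact ((contDiffAt_const.add contDiffAt_id).pow 2).mul
    ((contDiffAt_const.div hsqrt (Real.sqrt_pos.2 hpos).ne').add contDiffAt_const)

/-- For `λ > −1` there exist `R > 0` and a `C²` function `u` on `[0, R]`
with `u(0) = u'(0) = 0`, `u''(0) = √(1 + λ)`, satisfying
`u' u'' = r (1 + u'²)² (1/√(1 + u'²) + λ)` on `(0, R]`. -/
theorem exists_rotational_translator_orthogonal_to_axis
    (lam : ℝ) (hlam : -1 < lam) :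
    ∃ R : ℝ, 0 < R ∧ ∃ u u' u'' : ℝ → ℝ,
      (∀ r ∈ Set.Icc (0 : ℝ) R, HasDerivWithinAt u (u' r) (Set.Icc (0 : ℝ) R) r) ∧
      (∀ r ∈ Set.Icc (0 : ℝ) R, HasDerivWithinAt u' (u'' r) (Set.Icc (0 : ℝ) R) r) ∧
      ContinuousOn u'' (Set.Icc (0 : ℝ) R) ∧
      u 0 = 0 ∧ u' 0 = 0 ∧ u'' 0 = Real.sqrt (1 + lam) ∧
      (∀ r ∈ Set.Ioc (0 : ℝ) R,
        u' r * u'' r =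
          r * (1 + u' r ^ 2) ^ 2 * (1 / Real.sqrt (1 + u' r ^ 2) + lam)) := by
  obtain ⟨R, hR, v, hv0, hv⟩ :=
    exists_integral_curve_of_contDiffAt_of_pos
      (contDiffAt_translatorRhs (lam := lam) neg_one_lt_zero) (by rw [translatorRhs_zero]; linarith)
  have hp (r) (hr : r ∈ Icc 0 R) :
      HasDerivAt (sqrtProfile v) (sqrtProfileDeriv (translatorRhs lam) v r) r :=
    hasDerivAt_sqrtProfile hv0 (hv r hr).1 (hv r hr).2.2 hr.1
  refine ⟨R, hR, fun r => ∫ t in (0 : ℝ)..r, sqrtProfile v t, sqrtProfile v,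
    sqrtProfileDeriv (translatorRhs lam) v,
    fun r hr => ContinuousOn.hasDerivWithinAt_integral_Icc
      (fun t ht => (hp t ht).continuousAt.continuousWithinAt) hr,
    fun r hr => (hp r hr).hasDerivWithinAt,
    fun r hr =>
      (continuousAt_sqrtProfileDeriv (hv r hr).1 (hv r hr).2.1 (hv r hr).2.2).continuousWithinAt,
    by simp, sqrtProfile_zero v, ?_, fun r hr => ?_⟩
  · rw [sqrtProfileDeriv_zero (by simpa using (hv 0 (left_mem_Icc.2 hR.le)).1), hv0,
      translatorRhs_zero]
  · rw [sqrtProfile_mul_sqrtProfileDeriv hv0 (hv r (Ioc_subset_Icc_self hr)).2.2, translatorRhs,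
      mul_assoc]
end

section
/- Let λ ∈ ℝ, ω ∈ (0, ∞], and let x, θ : ℝ → ℝ be differentiable on [0, ω) with x(0) = 0, θ(0) = 0, and satisfying for all s ∈ [0, ω): x'(s) = cos θ(s) and θ'(s) sin θ(s) = x(s)(cos θ(s) + λ). Then for every s ∈ [0, ω): 1 − cos θ(s) = x(s)²/2 + λ·∫₀ˢ x(t) dt. -/
/-! Along a solution, `F = 1 - cos θ - x²/2` has derivative
`θ' sin θ - x cos θ = λ x`, so the first integral is the fundamental theorem of calculus
applied to `F`, which vanishes at `0`. -/

open Set intervalIntegral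

theorem integral_eq_sub_of_hasDerivWithinAt_Icc {F f : ℝ → ℝ} {a b : ℝ} (hab : a ≤ b)
    (hF : ∀ t ∈ Icc a b, HasDerivWithinAt F (f t) (Icc a b) t)
    (hf : ContinuousOn f (Icc a b)) :
    ∫ t in a..b, f t = F b - F a :=
  integral_eq_sub_of_hasDerivAt_of_le hab
    (fun t ht => (hF t ht).continuousWithinAt)
    (fun t ht => (hF t (Ioo_subset_Icc_self ht)).hasDerivAt (Icc_mem_nhds ht.1 ht.2))
    (hf.intervalIntegrable_of_Icc hab)

theorem hasDerivWithinAt_one_sub_cos_sub_sq_div_two {x θ : ℝ → ℝ} {θ' lam t : ℝ}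
    {S : Set ℝ}
    (hx : HasDerivWithinAt x (Real.cos (θ t)) S t) (hθ : HasDerivWithinAt θ θ' S t)
    (heq : θ' * Real.sin (θ t) = x t * (Real.cos (θ t) + lam)) :
    HasDerivWithinAt (fun r => 1 - Real.cos (θ r) - x r ^ 2 / 2) (lam * x t) S t := by
  have hcos := (Real.hasDerivAt_cos (θ t)).comp_hasDerivWithinAt t hθ
  refine (((hasDerivWithinAt_const t S 1).sub hcos).sub ((hx.pow 2).div_const 2)).congr_deriv ?_
  linear_combination heq

theorem Icc_subset_setOf_nonneg_coe_lt {s : ℝ} {ω : EReal} (hs : (s : EReal) < ω) :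
    Icc 0 s ⊆ {r : ℝ | 0 ≤ r ∧ (r : EReal) < ω} :=
  fun _ hr => ⟨hr.1, (EReal.coe_le_coe_iff.mpr hr.2).trans_lt hs⟩

theorem rotational_translator_first_integral_general
    (lam : ℝ) (ω : EReal)
    (x θ θ' : ℝ → ℝ)
    (hx0 : x 0 = 0) (hθ0 : θ 0 = 0)
    (hx : ∀ s : ℝ, 0 ≤ s → (s : EReal) < ω →
      HasDerivWithinAt x (Real.cos (θ s)) {r : ℝ | 0 ≤ r ∧ (r : EReal) < ω} s)
    (hθ : ∀ s : ℝ, 0 ≤ s → (s : EReal) < ω →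
      HasDerivWithinAt θ (θ' s) {r : ℝ | 0 ≤ r ∧ (r : EReal) < ω} s)
    (heq : ∀ s : ℝ, 0 ≤ s → (s : EReal) < ω →
      θ' s * Real.sin (θ s) = x s * (Real.cos (θ s) + lam)) :
    ∀ s : ℝ, 0 ≤ s → (s : EReal) < ω →
      1 - Real.cos (θ s) = x s ^ 2 / 2 + lam * ∫ t in (0 : ℝ)..s, x t := by
  intro s hs hsω
  have hsub := Icc_subset_setOf_nonneg_coe_lt hsω
  have hxIcc : ∀ t ∈ Icc 0 s, HasDerivWithinAt x (Real.cos (θ t)) (Icc 0 s) t :=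
    fun t ht => (hx t (hsub ht).1 (hsub ht).2).mono hsub
  have hF : ∀ t ∈ Icc 0 s, HasDerivWithinAt (fun r => 1 - Real.cos (θ r) - x r ^ 2 / 2)
      (lam * x t) (Icc 0 s) t := fun t ht =>
    hasDerivWithinAt_one_sub_cos_sub_sq_div_two (hxIcc t ht)
      ((hθ t (hsub ht).1 (hsub ht).2).mono hsub) (heq t (hsub ht).1 (hsub ht).2)
  have hxc : ContinuousOn x (Icc 0 s) := fun t ht => (hxIcc t ht).continuousWithinAt
  have key := integral_eq_sub_of_hasDerivWithinAt_Icc hs hF (continuousOn_const.mul hxc)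
  rw [integral_const_mul, hx0, hθ0, Real.cos_zero] at key
  linarith

/-- The first integral of the generating-curve system: if `x(0) = θ(0) = 0`,
`x' = cos θ` and `θ' sin θ = x (cos θ + λ)` on `[0, ω)`, then
`1 − cos θ(s) = x(s)²/2 + λ ∫₀ˢ x(t) dt` on `[0, ω)`. -/
theorem rotational_translator_first_integral
    (lam : ℝ) (ω : EReal) (hω : 0 < ω)
    (x θ θ' : ℝ → ℝ)
    (hx0 : x 0 = 0) (hθ0 : θ 0 = 0)
    (hx : ∀ s : ℝ, 0 ≤ s → (s : EReal) < ω →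
      HasDerivWithinAt x (Real.cos (θ s)) {r : ℝ | 0 ≤ r ∧ (r : EReal) < ω} s)
    (hθ : ∀ s : ℝ, 0 ≤ s → (s : EReal) < ω →
      HasDerivWithinAt θ (θ' s) {r : ℝ | 0 ≤ r ∧ (r : EReal) < ω} s)
    (heq : ∀ s : ℝ, 0 ≤ s → (s : EReal) < ω →
      θ' s * Real.sin (θ s) = x s * (Real.cos (θ s) + lam)) :
    ∀ s : ℝ, 0 ≤ s → (s : EReal) < ω →
      1 - Real.cos (θ s) = x s ^ 2 / 2 + lam * ∫ t in (0 : ℝ)..s, x t :=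
  rotational_translator_first_integral_general lam ω x θ θ' hx0 hθ0 hx hθ heq
end

section
/- Let λ > 0, ω ∈ (0, ∞], and let x, θ : ℝ → ℝ be differentiable on [0, ω) with x(0) = 0, θ(0) = 0, and satisfying for all s ∈ [0, ω): x'(s) = cos θ(s) and θ'(s) sin θ(s) = x(s)(cos θ(s) + λ). Suppose there is s₁ ∈ (0, ω) with θ(s₁) = π/2, x(s) > 0 for all s ∈ (0, s₁), and θ(s) ∈ [0, π/2] for all s ∈ [0, s₁]. Then x(s) < √2 for every s ∈ [0, s₁]. -/
/-!
Along a solution, the first integral `G = 1 - cos θ - x² / 2` satisfies `G' = λ x`, i.e.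
`G(s) = λ ∫₀ˢ x`. Since `x > 0` before `s₁`, `G` is strictly increasing from `G(0) = 0`, so `x² / 2 < 1 - cos θ ≤ 1`
as long as `cos θ ≥ 0`, which holds while `θ ∈ [0, π/2]`.
-/

open Real Set

noncomputable def firstIntegral (x θ : ℝ → ℝ) (s : ℝ) : ℝ := 1 - cos (θ s) - x s ^ 2 / 2

section

variable {lam : ℝ} {x θ θ' : ℝ → ℝ}

theorem hasDerivWithinAt_firstIntegral {t : Set ℝ} {s : ℝ}
    (hx : HasDerivWithinAt x (cos (θ s)) t s) (hθ : HasDerivWithinAt θ (θ' s) t s)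
    (heq : θ' s * sin (θ s) = x s * (cos (θ s) + lam)) :
    HasDerivWithinAt (firstIntegral x θ) (lam * x s) t s := by
  have h := ((hasDerivWithinAt_const s t (1 : ℝ)).sub hθ.cos).sub ((hx.pow 2).div_const 2)
  exact h.congr_deriv (by linear_combination heq)

theorem strictMonoOn_firstIntegral {a b : ℝ} (hlam : 0 < lam)
    (hx : ∀ s ∈ Icc a b, HasDerivWithinAt x (cos (θ s)) (Icc a b) s)
    (hθ : ∀ s ∈ Icc a b, HasDerivWithinAt θ (θ' s) (Icc a b) s)
    (heq : ∀ s ∈ Ioo a b, θ' s * sin (θ s) = x s * (cos (θ s) + lam))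
    (hxpos : ∀ s ∈ Ioo a b, 0 < x s) :
    StrictMonoOn (firstIntegral x θ) (Icc a b) := by
  have hIoo : Ioo a b ⊆ Icc a b := Ioo_subset_Icc_self
  have hxc : ContinuousOn x (Icc a b) := fun s hs => (hx s hs).continuousWithinAt
  have hθc : ContinuousOn θ (Icc a b) := fun s hs => (hθ s hs).continuousWithinAt
  refine strictMonoOn_of_hasDerivWithinAt_pos (convex_Icc a b) (f' := fun s => lam * x s)
    ((continuousOn_const.sub (continuous_cos.comp_continuousOn hθc)).sub
      ((hxc.pow 2).div_const 2)) ?_ ?_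
  · rw [interior_Icc]
    exact fun s hs =>
      hasDerivWithinAt_firstIntegral ((hx s (hIoo hs)).mono hIoo) ((hθ s (hIoo hs)).mono hIoo)
        (heq s hs)
  · rw [interior_Icc]
    exact fun s hs => mul_pos hlam (hxpos s hs)

theorem lt_sqrt_two_of_firstIntegral_pos {s : ℝ} (hcos : 0 ≤ cos (θ s))
    (h : 0 < firstIntegral x θ s) : x s < √2 := by
  unfold firstIntegral at h
  exact lt_sqrt_of_sq_lt (by linarith)

end

theorem rotational_translator_radius_lt_sqrt_two_general
    (lam : ℝ) (hlam : 0 < lam) (ω : EReal)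
    (x θ θ' : ℝ → ℝ)
    (hx0 : x 0 = 0) (hθ0 : θ 0 = 0)
    (hx : ∀ s : ℝ, 0 ≤ s → (s : EReal) < ω →
      HasDerivWithinAt x (Real.cos (θ s)) {r : ℝ | 0 ≤ r ∧ (r : EReal) < ω} s)
    (hθ : ∀ s : ℝ, 0 ≤ s → (s : EReal) < ω →
      HasDerivWithinAt θ (θ' s) {r : ℝ | 0 ≤ r ∧ (r : EReal) < ω} s)
    (heq : ∀ s : ℝ, 0 ≤ s → (s : EReal) < ω →
      θ' s * Real.sin (θ s) = x s * (Real.cos (θ s) + lam))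
    (s₁ : ℝ) (hs₁ω : (s₁ : EReal) < ω)
    (hxpos : ∀ s ∈ Set.Ioo 0 s₁, 0 < x s)
    (hθrange : ∀ s ∈ Set.Icc 0 s₁, θ s ∈ Set.Icc 0 (π / 2)) :
    ∀ s ∈ Set.Icc 0 s₁, x s < Real.sqrt 2 := by
  have hIcc : Icc 0 s₁ ⊆ {r : ℝ | 0 ≤ r ∧ (r : EReal) < ω} := fun r hr =>
    ⟨hr.1, (EReal.coe_le_coe_iff.2 hr.2).trans_lt hs₁ω⟩
  have hmono : StrictMonoOn (firstIntegral x θ) (Icc 0 s₁) :=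
    strictMonoOn_firstIntegral hlam
      (fun s hs => (hx s hs.1 (hIcc hs).2).mono hIcc)
      (fun s hs => (hθ s hs.1 (hIcc hs).2).mono hIcc)
      (fun s hs => heq s hs.1.le (hIcc (Ioo_subset_Icc_self hs)).2) hxpos
  intro s hs
  rcases hs.1.eq_or_lt with rfl | hs0
  · simp [hx0]
  have hθs := hθrange s hs
  refine lt_sqrt_two_of_firstIntegral_pos
    (cos_nonneg_of_mem_Icc ⟨by linarith [hθs.1, pi_pos], hθs.2⟩) ?_
  simpa [firstIntegral, hx0, hθ0] using hmono (left_mem_Icc.2 (hs0.le.trans hs.2)) hs hs0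

/-- For `λ > 0`, along a solution of the generating-curve system with
`x(0) = θ(0) = 0`, if `θ` reaches `π/2` at `s₁` with `x > 0` on `(0, s₁)` and
`θ ∈ [0, π/2]` on `[0, s₁]`, then `x(s) < √2` on `[0, s₁]`. -/
theorem rotational_translator_radius_lt_sqrt_two
    (lam : ℝ) (hlam : 0 < lam) (ω : EReal) (hω : 0 < ω)
    (x θ θ' : ℝ → ℝ)
    (hx0 : x 0 = 0) (hθ0 : θ 0 = 0)
    (hx : ∀ s : ℝ, 0 ≤ s → (s : EReal) < ω →
      HasDerivWithinAt x (Real.cos (θ s)) {r : ℝ | 0 ≤ r ∧ (r : EReal) < ω} s)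
    (hθ : ∀ s : ℝ, 0 ≤ s → (s : EReal) < ω →
      HasDerivWithinAt θ (θ' s) {r : ℝ | 0 ≤ r ∧ (r : EReal) < ω} s)
    (heq : ∀ s : ℝ, 0 ≤ s → (s : EReal) < ω →
      θ' s * Real.sin (θ s) = x s * (Real.cos (θ s) + lam))
    (s₁ : ℝ) (hs₁pos : 0 < s₁) (hs₁ω : (s₁ : EReal) < ω)
    (hθs₁ : θ s₁ = π / 2)
    (hxpos : ∀ s ∈ Set.Ioo 0 s₁, 0 < x s)
    (hθrange : ∀ s ∈ Set.Icc 0 s₁, θ s ∈ Set.Icc 0 (π / 2)) :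
    ∀ s ∈ Set.Icc 0 s₁, x s < Real.sqrt 2 :=
  rotational_translator_radius_lt_sqrt_two_general lam hlam ω x θ θ' hx0 hθ0 hx hθ heq s₁ hs₁ω hxpos
    hθrange
end

section
/- Let λ > 0. There do not exist functions x, θ : ℝ → ℝ, differentiable on [0, ∞), such that x(0) > 0, θ(s) ∈ (0, π/2) for all s ≥ 0, and for all s ≥ 0: x'(s) = cos θ(s) and θ'(s) sin θ(s) = x(s)(cos θ(s) + λ). -/
/-! Since `x' = cos θ > 0`, `x` increases, so `x ≥ x(0)`. With `0 < sin θ ≤ 1` and `cos θ > 0` the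
equation gives `θ' ≥ θ' sin θ = x (cos θ + λ) ≥ x(0) λ`, so `θ` grows at least linearly with slope
`x(0) λ > 0` and exceeds `π / 2` by time `π / (2 x(0) λ)`. -/

open Real Set

theorem monotoneOn_Ici_of_hasDerivWithinAt_nonneg {f f' : ℝ → ℝ} {a : ℝ}
    (hf : ∀ s ∈ Ici a, HasDerivWithinAt f (f' s) (Ici a) s) (hf' : ∀ s ∈ Ici a, 0 ≤ f' s) :
    MonotoneOn f (Ici a) := by
  refine monotoneOn_of_hasDerivWithinAt_nonneg (f' := f') (convex_Ici a)
    (fun s hs ↦ (hf s hs).continuousWithinAt) (fun s hs ↦ ?_) (fun s hs ↦ ?_)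
  · rw [interior_Ici] at hs ⊢
    exact (hf s (Ioi_subset_Ici_self hs)).mono Ioi_subset_Ici_self
  · exact hf' s (interior_subset hs)

theorem add_mul_sub_le_of_le_hasDerivWithinAt {f f' : ℝ → ℝ} {a C s : ℝ}
    (hf : ∀ t ∈ Ici a, HasDerivWithinAt f (f' t) (Ici a) t) (hC : ∀ t ∈ Ici a, C ≤ f' t)
    (hs : a ≤ s) : f a + C * (s - a) ≤ f s := by
  have hmono : MonotoneOn (fun t ↦ f t - C * t) (Ici a) :=
    monotoneOn_Ici_of_hasDerivWithinAt_nonneg (f' := fun t ↦ f' t - C)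
      (fun t ht ↦ (hf t ht).sub (((hasDerivWithinAt_id t _).const_mul C).congr_deriv (mul_one C)))
      (fun t ht ↦ sub_nonneg.2 (hC t ht))
  have := hmono self_mem_Ici hs hs
  linarith

theorem mul_le_of_mul_sin_eq_mul_cos_add {θ d x x₀ lam : ℝ} (hθ : θ ∈ Ioo 0 (π / 2))
    (hlam : 0 ≤ lam) (hx₀ : 0 ≤ x₀) (hx : x₀ ≤ x) (h : d * sin θ = x * (cos θ + lam)) :
    x₀ * lam ≤ d := by
  have hsin : 0 < sin θ := sin_pos_of_pos_of_lt_pi hθ.1 (by linarith [hθ.2, pi_pos])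
  have hcos : 0 < cos θ := cos_pos_of_mem_Ioo ⟨by linarith [hθ.1, pi_pos], hθ.2⟩
  have hlower : x₀ * lam ≤ d * sin θ := by rw [h]; nlinarith
  have hd : 0 ≤ d := nonneg_of_mul_nonneg_left (by nlinarith) hsin
  nlinarith [sin_le_one θ]

/-- For `λ > 0` there is no global solution on `[0, ∞)` of the
generating-curve system with `x(0) > 0` and `θ` staying in `(0, π/2)`. -/
theorem rotational_translator_angle_must_reach_pi_div_two
    (lam : ℝ) (hlam : 0 < lam) :
    ¬ ∃ x θ θ' : ℝ → ℝ,
      0 < x 0 ∧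
      (∀ s : ℝ, 0 ≤ s → θ s ∈ Set.Ioo 0 (π / 2)) ∧
      (∀ s : ℝ, 0 ≤ s → HasDerivWithinAt x (Real.cos (θ s)) (Set.Ici 0) s) ∧
      (∀ s : ℝ, 0 ≤ s → HasDerivWithinAt θ (θ' s) (Set.Ici 0) s) ∧
      (∀ s : ℝ, 0 ≤ s → θ' s * Real.sin (θ s) = x s * (Real.cos (θ s) + lam)) := by
  rintro ⟨x, θ, θ', hx₀, hθ, hx, hθ', hode⟩
  have hx_mono : MonotoneOn x (Ici 0) :=
    monotoneOn_Ici_of_hasDerivWithinAt_nonneg hx fun s hs ↦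
      (cos_pos_of_mem_Ioo ⟨by linarith [(hθ s hs).1, pi_pos], (hθ s hs).2⟩).le
  have hrate : ∀ s ∈ Ici 0, x 0 * lam ≤ θ' s := fun s hs ↦
    mul_le_of_mul_sin_eq_mul_cos_add (hθ s hs) hlam.le hx₀.le
      (hx_mono self_mem_Ici hs hs) (hode s hs)
  set T := π / 2 / (x 0 * lam)
  have hT : 0 ≤ T := by positivity
  have hgrowth := add_mul_sub_le_of_le_hasDerivWithinAt hθ' hrate hT
  have hslope : x 0 * lam * (T - 0) = π / 2 := by
    simp only [T, sub_zero]
    field_simp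
  linarith [(hθ 0 le_rfl).1, (hθ T hT).2]
end

section
/- Let λ < 0, ω ∈ (0, ∞], and let x, θ : ℝ → ℝ with θ differentiable on [0, ω), θ(0) = 0, x(s) > 0 for all s ∈ (0, ω), and θ'(s) sin θ(s) = x(s)(cos θ(s) + λ) for all s ∈ [0, ω). Then θ(s) < π/2 for every s ∈ [0, ω). -/
open Real Set

/-! At the first parameter where `θ` reaches `π / 2` the curve equation reads `θ' = λ x < 0`,
whereas `θ` has just increased to that value from below, which forces `θ' ≥ 0`. -/

theorem ContinuousOn.exists_first_eq_of_lt_of_le {f : ℝ → ℝ} {a b c : ℝ}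
    (hab : a ≤ b) (hf : ContinuousOn f (Icc a b)) (ha : f a < c) (hb : c ≤ f b) :
    ∃ t ∈ Ioc a b, f t = c ∧ ∀ r ∈ Ico a t, f r < c := by
  set T := Icc a b ∩ f ⁻¹' Ici c
  have hTbdd : BddBelow T := ⟨a, fun r hr => hr.1.1⟩
  have htT : sInf T ∈ T :=
    (hf.preimage_isClosed_of_isClosed isClosed_Icc isClosed_Ici).csInf_mem
      ⟨b, ⟨hab, le_rfl⟩, hb⟩ hTbdd
  set t := sInf T
  have hta : a < t := htT.1.1.lt_of_ne fun h => (h ▸ ha).not_ge htT.2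
  obtain ⟨r, hr, hfr⟩ : ∃ r ∈ Icc a t, f r = c :=
    intermediate_value_Icc hta.le (hf.mono (Icc_subset_Icc_right htT.1.2)) ⟨ha.le, htT.2⟩
  have hrt : r = t :=
    le_antisymm hr.2 (csInf_le hTbdd ⟨⟨hr.1, hr.2.trans htT.1.2⟩, hfr.ge⟩)
  refine ⟨t, ⟨hta, htT.1.2⟩, hrt ▸ hfr, fun r' hr' => lt_of_not_ge fun hc => ?_⟩
  exact hr'.2.not_ge (csInf_le hTbdd ⟨⟨hr'.1, hr'.2.le.trans htT.1.2⟩, hc⟩)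

theorem IsLocalMaxOn.hasDerivWithinAt_Icc_right_nonneg {f : ℝ → ℝ} {f' a b : ℝ} (hab : a < b)
    (hmax : IsLocalMaxOn f (Icc a b) b) (hf : HasDerivWithinAt f f' (Icc a b) b) : 0 ≤ f' := by
  have hcone : a - b ∈ posTangentConeAt (Icc a b) b := by
    apply sub_mem_posTangentConeAt_of_segment_subset
    rw [segment_symm, segment_eq_Icc hab.le]
  have hle := hmax.hasFDerivWithinAt_nonpos hf.hasFDerivWithinAt hcone
  simp only [ContinuousLinearMap.toSpanSingleton_apply, smul_eq_mul] at hle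
  exact nonneg_of_mul_nonpos_right hle (sub_neg.2 hab)

theorem lt_of_hasDerivWithinAt_neg_of_eq {f f' : ℝ → ℝ} {a b c : ℝ} (hab : a ≤ b)
    (hf : ∀ t ∈ Icc a b, HasDerivWithinAt f (f' t) (Icc a b) t) (ha : f a < c)
    (hneg : ∀ t ∈ Ioc a b, f t = c → f' t < 0) : f b < c := by
  by_contra! hb
  obtain ⟨t, ht, hft, hbefore⟩ := ContinuousOn.exists_first_eq_of_lt_of_le hab
    (fun t ht => (hf t ht).continuousWithinAt) ha hb
  have hsub : Icc a t ⊆ Icc a b := Icc_subset_Icc_right ht.2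
  have hmax : IsMaxOn f (Icc a t) t := fun r hr =>
    hr.2.eq_or_lt.elim (fun h => h ▸ le_refl (f t)) fun h => hft ▸ (hbefore r ⟨hr.1, h⟩).le
  exact (hneg t ht hft).not_ge <| hmax.localize.hasDerivWithinAt_Icc_right_nonneg ht.1
    ((hf t (hsub ⟨ht.1.le, le_rfl⟩)).mono hsub)

theorem rotational_translator_angle_lt_pi_div_two_general
    (lam : ℝ) (hlam : lam < 0) (ω : EReal)
    (x θ θ' : ℝ → ℝ) (hθ0 : θ 0 = 0)
    (hxpos : ∀ s : ℝ, 0 < s → (s : EReal) < ω → 0 < x s)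
    (hθ : ∀ s : ℝ, 0 ≤ s → (s : EReal) < ω →
      HasDerivWithinAt θ (θ' s) {r : ℝ | 0 ≤ r ∧ (r : EReal) < ω} s)
    (heq : ∀ s : ℝ, 0 ≤ s → (s : EReal) < ω →
      θ' s * Real.sin (θ s) = x s * (Real.cos (θ s) + lam)) :
    ∀ s : ℝ, 0 ≤ s → (s : EReal) < ω → θ s < π / 2 := by
  intro s hs hsω
  have hdom : ∀ t ∈ Icc 0 s, 0 ≤ t ∧ (t : EReal) < ω := fun t ht =>
    ⟨ht.1, (EReal.coe_le_coe_iff.2 ht.2).trans_lt hsω⟩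
  refine lt_of_hasDerivWithinAt_neg_of_eq hs
    (fun t ht => (hθ t (hdom t ht).1 (hdom t ht).2).mono hdom) (by linarith [pi_pos]) ?_
  intro t ht hθt
  have hdomt := hdom t (Ioc_subset_Icc_self ht)
  have hslope : θ' t = x t * lam := by
    simpa [hθt] using heq t hdomt.1 hdomt.2
  rw [hslope]
  exact mul_neg_of_pos_of_neg (hxpos t ht.1 hdomt.2) hlam

/-- For `λ < 0`, a solution of the generating-curve system on `[0, ω)`
with `θ(0) = 0` and `x > 0` on `(0, ω)` satisfies `θ(s) < π/2` on `[0, ω)`. -/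
theorem rotational_translator_angle_lt_pi_div_two
    (lam : ℝ) (hlam : lam < 0) (ω : EReal) (hω : 0 < ω)
    (x θ θ' : ℝ → ℝ) (hθ0 : θ 0 = 0)
    (hxpos : ∀ s : ℝ, 0 < s → (s : EReal) < ω → 0 < x s)
    (hθ : ∀ s : ℝ, 0 ≤ s → (s : EReal) < ω →
      HasDerivWithinAt θ (θ' s) {r : ℝ | 0 ≤ r ∧ (r : EReal) < ω} s)
    (heq : ∀ s : ℝ, 0 ≤ s → (s : EReal) < ω →
      θ' s * Real.sin (θ s) = x s * (Real.cos (θ s) + lam)) :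
    ∀ s : ℝ, 0 ≤ s → (s : EReal) < ω → θ s < π / 2 :=
  rotational_translator_angle_lt_pi_div_two_general lam hlam ω x θ θ' hθ0 hxpos hθ heq
end

section
/- Let λ ∈ (−1, 0), c > 0, and let a < s₂ be real numbers. There do not exist functions x, θ : ℝ → ℝ such that θ is differentiable on (a, s₂), θ is continuous at s₂, θ(s₂) = 0, θ(s) ∈ (0, π/2) for all s ∈ (a, s₂), x(s) ≥ c for all s ∈ (a, s₂), and θ'(s) sin θ(s) = x(s)(cos θ(s) + λ) for all s ∈ (a, s₂). -/
open Real

/-- For `λ ∈ (−1, 0)`, the angle function `θ` of the generating-curve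
system, positive on `(a, s₂)` with the distance to the axis bounded below by `c > 0`,
cannot decrease to the value `0` at `s₂`. -/
theorem rotational_translator_angle_cannot_return_to_zero
    (lam : ℝ) (hlam : lam ∈ Set.Ioo (-1 : ℝ) 0)
    (c : ℝ) (hc : 0 < c) (a s₂ : ℝ) (has₂ : a < s₂) :
    ¬ ∃ x θ θ' : ℝ → ℝ,
      (∀ s ∈ Set.Ioo a s₂, HasDerivAt θ (θ' s) s) ∧
      ContinuousAt θ s₂ ∧ θ s₂ = 0 ∧
      (∀ s ∈ Set.Ioo a s₂, θ s ∈ Set.Ioo 0 (π / 2)) ∧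
      (∀ s ∈ Set.Ioo a s₂, c ≤ x s) ∧
      (∀ s ∈ Set.Ioo a s₂, θ' s * Real.sin (θ s) = x s * (Real.cos (θ s) + lam)) := by
  rintro ⟨x, θ, θ', hderiv, hcont, hθ0, hrange, hxc, hode⟩
  set f : ℝ → ℝ := fun s => Real.cos (θ s) with hf
  -- cos ∘ θ is continuous at s₂ with value 1
  have hfc : ContinuousAt f s₂ := Real.continuous_cos.continuousAt.comp hcont
  have hfval : f s₂ = 1 := by simp [hf, hθ0]
  -- eventually cos (θ s) + lam > 0 near s₂
  have hev : ∀ᶠ s in nhds s₂, -lam < f s := by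
    have : -lam < f s₂ := by rw [hfval]; linarith [hlam.1]
    exact hfc.eventually_const_lt this
  obtain ⟨δ, hδ, hball⟩ := Metric.eventually_nhds_iff.mp hev
  set s₁ : ℝ := max a (s₂ - δ / 2) with hs₁
  have hs₁lt : s₁ < s₂ := by
    apply max_lt has₂ (by linarith)
  have hsub : Set.Ioo s₁ s₂ ⊆ Set.Ioo a s₂ := by
    intro t ht
    exact ⟨lt_of_le_of_lt (le_max_left _ _) ht.1, ht.2⟩
  have hpos : ∀ t ∈ Set.Ioo s₁ s₂, 0 < f t + lam := by
    intro t ht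
    have h1 : s₂ - δ / 2 < t := lt_of_le_of_lt (le_max_right _ _) ht.1
    have : dist t s₂ < δ := by
      rw [Real.dist_eq, abs_lt]
      constructor <;> [linarith [ht.2]; linarith [ht.2]]
    have := hball this
    linarith
  -- derivative of f on the open interval
  have hfd : ∀ t ∈ Set.Ioo a s₂, HasDerivAt f (-Real.sin (θ t) * θ' t) t := by
    intro t ht
    exact (Real.hasDerivAt_cos (θ t)).comp t (hderiv t ht)
  have hfneg : ∀ t ∈ Set.Ioo s₁ s₂, deriv f t < 0 := by
    intro t ht
    have ht' := hsub ht
    rw [(hfd t ht').deriv]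
    have : -Real.sin (θ t) * θ' t = -(x t * (Real.cos (θ t) + lam)) := by
      rw [← hode t ht']; ring
    rw [this]
    have hx := lt_of_lt_of_le hc (hxc t ht')
    have := hpos t ht
    nlinarith
  have hanti : StrictAntiOn f (Set.Ioo s₁ s₂) := by
    apply strictAntiOn_of_deriv_neg (convex_Ioo _ _)
    · intro t ht
      exact ((hfd t (hsub ht)).differentiableAt.continuousAt).continuousWithinAt
    · rwa [interior_Ioo]
  -- pick a point s in (s₁, s₂)
  obtain ⟨s, hs⟩ := Set.nonempty_Ioo.mpr hs₁lt
  -- f tends to 1 along s₂ from the left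
  have hlim : Filter.Tendsto f (nhdsWithin s₂ (Set.Iio s₂)) (nhds 1) := by
    rw [← hfval]
    exact hfc.continuousWithinAt.tendsto
  have hle : (1 : ℝ) ≤ f s := by
    apply le_of_tendsto hlim
    filter_upwards [Ioo_mem_nhdsLT_of_mem ⟨hs.2, le_refl s₂⟩] with t ht
    exact le_of_lt (hanti hs ⟨lt_trans hs.1 ht.1, ht.2⟩ ht.1)
  have hθs := hrange s (hsub hs)
  have : f s < 1 := by
    have := Real.cos_lt_cos_of_nonneg_of_le_pi_div_two le_rfl (le_of_lt hθs.2) hθs.1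
    simpa using this
  linarith
end

section
/- Let λ ∈ ℝ and let x, θ : ℝ → ℝ with x differentiable on [0, ∞), x'(s) = cos θ(s) for all s ≥ 0, x(s) → ∞ as s → ∞, and suppose the identity 1 − cos θ(s) = x(s)²/2 + λ·∫₀ˢ x(t) dt holds for all s ≥ 0. If cos θ(s) converges to a limit L as s → ∞ with L ≠ 0, then L = −λ. -/
/-! Put `G(s) = x(s)²/2 + λ ∫₀ˢ x`. By the first integral `G = 1 - cos θ`, so `G` converges to
`1 - L`, while `G' = x (cos θ + λ)`. If `L ≠ -λ`, then since `x → ∞` the derivative `G'` is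
eventually bounded away from `0`, and the mean value theorem on the intervals `[s, s + 1]`
contradicts the convergence of `G`. -/

open Filter Set Topology

theorem frequently_abs_lt_of_tendsto_of_hasDerivAt {f f' : ℝ → ℝ} {l ε : ℝ}
    (hf : Tendsto f atTop (𝓝 l)) (hf' : ∀ᶠ t in atTop, HasDerivAt f (f' t) t) (hε : 0 < ε) :
    ∃ᶠ t in atTop, |f' t| < ε := by
  have hstep : Tendsto (fun s => f (s + 1) - f s) atTop (𝓝 0) := by
    simpa using (hf.comp (tendsto_atTop_add_const_right _ 1 tendsto_id)).sub hf
  obtain ⟨s₀, hs₀⟩ := eventually_atTop.1 hf'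
  refine frequently_atTop.2 fun a => ?_
  obtain ⟨s, hsmall, hs⟩ :=
    ((hstep.eventually (eventually_abs_sub_lt 0 hε)).and
      (eventually_ge_atTop (max a s₀))).exists
  have hderiv : ∀ t ∈ Ioo s (s + 1), HasDerivAt f (f' t) t := fun t ht =>
    hs₀ t (by linarith [le_max_right a s₀, ht.1])
  have hcont : ContinuousOn f (Icc s (s + 1)) := fun t ht =>
    (hs₀ t (by linarith [le_max_right a s₀, ht.1])).continuousAt.continuousWithinAt
  obtain ⟨c, hc, hslope⟩ := exists_hasDerivAt_eq_slope f f' (lt_add_one s) hcont hderiv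
  refine ⟨c, by linarith [le_max_left a s₀, hc.1], ?_⟩
  rw [hslope]
  simpa using hsmall

theorem hasDerivAt_integral_of_continuousOn_Ici {E : Type*} [NormedAddCommGroup E]
    [NormedSpace ℝ E] [CompleteSpace E] {f : ℝ → E} {a s : ℝ} (hf : ContinuousOn f (Ici a))
    (hs : a < s) : HasDerivAt (fun u => ∫ t in a..u, f t) (f s) s := by
  have hfat : ∀ t ∈ Ioi a, ContinuousAt f t := fun t ht =>
    hf.continuousAt (Ici_mem_nhds ht)
  refine intervalIntegral.integral_hasDerivAt_right ?_
    (ContinuousAt.stronglyMeasurableAtFilter isOpen_Ioi hfat s hs) (hfat s hs)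
  exact (hf.mono fun t ht => by rw [uIcc_of_le hs.le] at ht; exact ht.1).intervalIntegrable

theorem hasDerivAt_sq_half_add_mul_integral {x x' : ℝ → ℝ} {a s : ℝ} (c : ℝ)
    (hx : ∀ t, a ≤ t → HasDerivWithinAt x (x' t) (Ici a) t) (hs : a < s) :
    HasDerivAt (fun u => x u ^ 2 / 2 + c * ∫ t in a..u, x t) (x s * (x' s + c)) s := by
  have hxs : HasDerivAt x (x' s) s := (hx s hs.le).hasDerivAt (Ici_mem_nhds hs)
  have hint := hasDerivAt_integral_of_continuousOn_Ici
    (fun t ht => (hx t ht).continuousWithinAt) hs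
  exact (((hxs.fun_pow 2).div_const 2).fun_add (hint.const_mul c)).congr_deriv (by ring)

theorem rotational_translator_asymptotic_angle_general
    (lam L : ℝ) (x θ : ℝ → ℝ)
    (hx : ∀ s : ℝ, 0 ≤ s → HasDerivWithinAt x (Real.cos (θ s)) (Set.Ici 0) s)
    (hxinf : Tendsto x atTop atTop)
    (hid : ∀ s : ℝ, 0 ≤ s →
      1 - Real.cos (θ s) = x s ^ 2 / 2 + lam * ∫ t in (0 : ℝ)..s, x t)
    (hL : Tendsto (fun s => Real.cos (θ s)) atTop (nhds L)) :
    L = -lam := by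
  set G : ℝ → ℝ := fun s => x s ^ 2 / 2 + lam * ∫ t in (0 : ℝ)..s, x t
  have hG : Tendsto G atTop (𝓝 (1 - L)) :=
    (tendsto_const_nhds.sub hL).congr' ((eventually_ge_atTop 0).mono hid)
  have hG' : ∀ᶠ s in atTop, HasDerivAt G (x s * (Real.cos (θ s) + lam)) s :=
    (eventually_gt_atTop 0).mono fun s hs => hasDerivAt_sq_half_add_mul_integral lam hx hs
  by_contra hne
  have hgap : 0 < |L + lam| := abs_pos.2 fun h => hne (by linarith)
  refine frequently_abs_lt_of_tendsto_of_hasDerivAt hG hG' (half_pos hgap) ?_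
  filter_upwards [hxinf.eventually_ge_atTop 1,
    (hL.add_const lam).abs.eventually (eventually_ge_nhds (half_lt_self hgap))] with s hx1 hcos
  rw [not_lt, abs_mul, abs_of_pos (show 0 < x s by linarith)]
  nlinarith

/-- If `x' = cos θ` on `[0, ∞)`, `x(s) → ∞`, the first integral
`1 − cos θ(s) = x(s)²/2 + λ ∫₀ˢ x(t) dt` holds, and `cos θ(s) → L ≠ 0` as `s → ∞`,
then `L = −λ`. -/
theorem rotational_translator_asymptotic_angle
    (lam L : ℝ) (x θ : ℝ → ℝ)
    (hx : ∀ s : ℝ, 0 ≤ s → HasDerivWithinAt x (Real.cos (θ s)) (Set.Ici 0) s)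
    (hxinf : Tendsto x atTop atTop)
    (hid : ∀ s : ℝ, 0 ≤ s →
      1 - Real.cos (θ s) = x s ^ 2 / 2 + lam * ∫ t in (0 : ℝ)..s, x t)
    (hL : Tendsto (fun s => Real.cos (θ s)) atTop (nhds L))
    (hLne : L ≠ 0) :
    L = -lam :=
  rotational_translator_asymptotic_angle_general lam L x θ hx hxinf hid hL
end

section
/- Let λ = −1, let I ⊆ ℝ be an interval containing 0, and let x, z, θ : ℝ → ℝ be differentiable on I with x(0) = 1, z(0) = 0, θ(0) = π/2, x(s) > 0 and θ(s) ∈ (0, π) for all s ∈ I, and satisfying for all s ∈ I: x'(s) = cos θ(s), z'(s) = sin θ(s), and θ'(s) sin θ(s) = x(s)(cos θ(s) − 1). Then θ is strictly decreasing on I, z is strictly increasing on I, and x(s) ≥ 1 for every s ∈ I. -/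
open Real

/-- For `λ = −1`, a solution of the generating-curve system
`x' = cos θ`, `z' = sin θ`, `θ' sin θ = x (cos θ − 1)` on an interval `I ∋ 0`, with
`x(0) = 1`, `z(0) = 0`, `θ(0) = π/2`, `x > 0` and `θ ∈ (0, π)` on `I`, has `θ` strictly
decreasing, `z` strictly increasing, and `x ≥ 1` on `I`. -/
theorem rotational_translator_lambda_neg_one_monotonicity
    (I : Set ℝ) (hI : I.OrdConnected) (h0I : (0 : ℝ) ∈ I)
    (x z θ θ' : ℝ → ℝ)
    (hx : ∀ s ∈ I, HasDerivWithinAt x (Real.cos (θ s)) I s)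
    (hz : ∀ s ∈ I, HasDerivWithinAt z (Real.sin (θ s)) I s)
    (hθ : ∀ s ∈ I, HasDerivWithinAt θ (θ' s) I s)
    (heq : ∀ s ∈ I, θ' s * Real.sin (θ s) = x s * (Real.cos (θ s) - 1))
    (hx0 : x 0 = 1) (hz0 : z 0 = 0) (hθ0 : θ 0 = π / 2)
    (hxpos : ∀ s ∈ I, 0 < x s)
    (hθrange : ∀ s ∈ I, θ s ∈ Set.Ioo 0 π) :
    StrictAntiOn θ I ∧ StrictMonoOn z I ∧ ∀ s ∈ I, 1 ≤ x s := by
  have hconv : Convex ℝ I := (convex_iff_ordConnected).2 hI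
  have hsin : ∀ s ∈ I, 0 < Real.sin (θ s) := fun s hs =>
    Real.sin_pos_of_pos_of_lt_pi (hθrange s hs).1 (hθrange s hs).2
  have hcoslt : ∀ s ∈ I, Real.cos (θ s) < 1 := by
    intro s hs
    nlinarith [Real.sin_sq_add_cos_sq (θ s), hsin s hs, Real.cos_le_one (θ s)]
  have hθ'neg : ∀ s ∈ I, θ' s < 0 := by
    intro s hs
    have h := heq s hs
    nlinarith [hsin s hs, hxpos s hs, hcoslt s hs]
  have hθanti : StrictAntiOn θ I := by
    apply strictAntiOn_of_hasDerivWithinAt_neg hconv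
      (fun s hs => (hθ s hs).continuousWithinAt)
      (fun s hs => ((hθ s (interior_subset hs)).mono interior_subset))
    exact fun s hs => hθ'neg s (interior_subset hs)
  have hzmono : StrictMonoOn z I := by
    apply strictMonoOn_of_hasDerivWithinAt_pos hconv
      (fun s hs => (hz s hs).continuousWithinAt)
      (fun s hs => ((hz s (interior_subset hs)).mono interior_subset))
    exact fun s hs => hsin s (interior_subset hs)
  refine ⟨hθanti, hzmono, ?_⟩
  -- sign of cos θ
  have hθle : ∀ s ∈ I, 0 ≤ s → θ s ≤ π / 2 := by
    intro s hs h0s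
    rcases eq_or_lt_of_le h0s with rfl | h
    · rw [hθ0]
    · exact le_of_lt (hθ0 ▸ hθanti h0I hs h)
  have hθge : ∀ s ∈ I, s ≤ 0 → π / 2 ≤ θ s := by
    intro s hs hs0
    rcases eq_or_lt_of_le hs0 with rfl | h
    · rw [hθ0]
    · exact le_of_lt (hθ0 ▸ hθanti hs h0I h)
  intro s hs
  rcases le_total 0 s with h0s | hs0
  · -- x monotone on I ∩ [0,∞)
    have hconv' : Convex ℝ (I ∩ Set.Ici 0) := hconv.inter (convex_Ici 0)
    have hmono : MonotoneOn x (I ∩ Set.Ici 0) := by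
      apply monotoneOn_of_hasDerivWithinAt_nonneg hconv'
        (fun t ht => ((hx t ht.1).continuousWithinAt).mono Set.inter_subset_left)
        (fun t ht => (hx t (interior_subset ht).1).mono
          ((interior_subset).trans Set.inter_subset_left))
      intro t ht
      have ht' := interior_subset ht
      refine Real.cos_nonneg_of_mem_Icc ⟨?_, hθle t ht'.1 ht'.2⟩
      have := (hθrange t ht'.1).1
      have : 0 < π / 2 := by positivity
      linarith [(hθrange t (interior_subset ht).1).1]
    have := hmono ⟨h0I, Set.self_mem_Ici⟩ ⟨hs, h0s⟩ h0s
    rwa [hx0] at this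
  · -- x antitone on I ∩ (-∞,0]
    have hconv' : Convex ℝ (I ∩ Set.Iic 0) := hconv.inter (convex_Iic 0)
    have hanti : AntitoneOn x (I ∩ Set.Iic 0) := by
      apply antitoneOn_of_hasDerivWithinAt_nonpos hconv'
        (fun t ht => ((hx t ht.1).continuousWithinAt).mono Set.inter_subset_left)
        (fun t ht => (hx t (interior_subset ht).1).mono
          ((interior_subset).trans Set.inter_subset_left))
      intro t ht
      have ht' := interior_subset ht
      refine Real.cos_nonpos_of_pi_div_two_le_of_le (hθge t ht'.1 ht'.2) ?_
      have := (hθrange t ht'.1).2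
      linarith [Real.pi_pos]
    have := hanti ⟨hs, hs0⟩ ⟨h0I, Set.self_mem_Iic⟩ hs0
    rwa [hx0] at this
end
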